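/- arXiv:2309.07342 — 2 statements merged into one kernel-verified Lean document; each statement's English description precedes it below -/
import Mathlib

section
/- Uniqueness of scattering states for the model system, single-mode version: let λ ≥ 0, and let (a, c) and (ã, c̃) be two pairs solving the mode-λ model system on (0,∞) that have the same asymptotic data (c₀, O, h) at τ = 0. Then a(τ) = ã(τ) and c(τ) = c̃(τ) for all τ > 0. -/
/-!
The system is linear, so the difference of two solutions with the same asymptotic data is a
solution with data `(0, 0, 0)`. For such a solution the energy `E = (a')² + a² + c²` tends to
`0` as `τ → 0⁺`, and on `(0, t]` it satisfies `E' ≤ C E`: the only singular term of `E'`,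
`-2τ⁻¹(a')²`, is nonpositive. Grönwall's inequality on `[ε, t]` gives
`E t ≤ E ε · exp (C t)`, and letting `ε → 0` yields `E t = 0`.
-/

open Set Filter

/-- The pair `(a, c)` solves the mode-`lam` model system on `I ⊆ (0,∞)`:
`a` is twice differentiable and `c` is differentiable on `I`, and for all `τ ∈ I`,
(E) `a'' + τ⁻¹·a' + 4q'·a + 4λ²·(τ²+1)⁻²·a = f₁·τ·a' + f₂·τ²·a + f₃·c` and
(C) `c' = 2τ·a`. -/
def SolvesModelSystem (q' : ℝ) (f₁ f₂ f₃ : ℝ → ℝ) (lam : ℝ)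
    (a c : ℝ → ℝ) (I : Set ℝ) : Prop :=
  ∀ τ ∈ I,
    DifferentiableAt ℝ a τ ∧ DifferentiableAt ℝ (deriv a) τ ∧ DifferentiableAt ℝ c τ ∧
    (deriv (deriv a) τ + τ⁻¹ * deriv a τ + 4 * q' * a τ
        + 4 * lam ^ 2 * ((τ ^ 2 + 1) ^ 2)⁻¹ * a τ
      = f₁ τ * τ * deriv a τ + f₂ τ * τ ^ 2 * a τ + f₃ τ * c τ) ∧
    deriv c τ = 2 * τ * a τ

/-- The pair `(a, c)` (solving the model system on `(0,∞)`, with `c` extended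
continuously to `[0,∞)`) has asymptotic data `(c₀, O, h)` at `τ = 0`. -/
def HasAsymptoticData (a c : ℝ → ℝ) (c₀ O h : ℝ) : Prop :=
  ContinuousOn c (Ici 0) ∧ c 0 = c₀ ∧
  ∃ K : ℝ, 0 ≤ K ∧ ∀ τ ∈ Ioc (0:ℝ) 1,
    |a τ - O * Real.log τ - h| ≤ K * τ ^ 2 * (1 + Real.log τ ^ 2) ∧
    |deriv a τ - O / τ| ≤ K * τ * (1 + Real.log τ ^ 2)

open Topology Real

theorem tendsto_mul_one_add_log_sq_nhdsGT_zero :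
    Tendsto (fun x : ℝ => x * (1 + log x ^ 2)) (𝓝[>] 0) (𝓝 0) := by
  have hid : Tendsto (fun x : ℝ => x) (𝓝[>] 0) (𝓝 0) :=
    tendsto_nhdsWithin_of_tendsto_nhds tendsto_id
  have hsq := (tendsto_log_mul_rpow_nhdsGT_zero (r := 1 / 2) (by norm_num)).pow 2
  have hsum : Tendsto (fun x => x + (log x * x ^ (1 / 2 : ℝ)) ^ 2) (𝓝[>] 0) (𝓝 0) := by
    simpa using hid.add hsq
  refine hsum.congr' ?_
  filter_upwards [self_mem_nhdsWithin] with x (hx : 0 < x)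
  rw [mul_pow, ← rpow_natCast (x ^ (1 / 2 : ℝ)), ← rpow_mul hx.le]
  norm_num
  ring

theorem le_zero_of_hasDerivAt_le_mul_self_of_tendsto {f f' : ℝ → ℝ} {K a b : ℝ} (hab : a < b)
    (hf : ∀ x ∈ Ioc a b, HasDerivAt f (f' x) x) (bound : ∀ x ∈ Ioc a b, f' x ≤ K * f x)
    (hlim : Tendsto f (𝓝[>] a) (𝓝 0)) : f b ≤ 0 := by
  have hgronwall : ∀ ε ∈ Ioo a b, f b ≤ f ε * exp (K * (b - ε)) := by
    intro ε hε
    have hsub : Icc ε b ⊆ Ioc a b := Icc_subset_Ioc_iff hε.2.le |>.mpr ⟨hε.1, le_rfl⟩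
    rw [← gronwallBound_ε0]
    have hsub' : Ico ε b ⊆ Ioc a b := Ico_subset_Icc_self.trans hsub
    exact le_gronwallBound_of_liminf_deriv_right_le
      (fun x hx => (hf x (hsub hx)).continuousAt.continuousWithinAt)
      (fun x hx r hr => (hf x (hsub' hx)).hasDerivWithinAt.liminf_right_slope_le hr)
      le_rfl (fun x hx => by simpa using bound x (hsub' hx)) b ⟨hε.2.le, le_rfl⟩
  have hbound : Tendsto (fun ε => f ε * exp (K * (b - ε))) (𝓝[>] a) (𝓝 0) := by
    have hexp : Tendsto (fun ε => exp (K * (b - ε))) (𝓝[>] a) (𝓝 (exp (K * (b - a)))) :=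
      (by fun_prop : Continuous fun ε => exp (K * (b - ε))).continuousWithinAt.tendsto
    simpa using hlim.mul hexp
  exact ge_of_tendsto hbound (eventually_of_mem (Ioo_mem_nhdsGT hab) hgronwall)

theorem two_mul_mul_le_abs_mul (α x y : ℝ) : 2 * α * x * y ≤ |α| * (x ^ 2 + y ^ 2) := by
  rcases abs_cases α with ⟨hα, -⟩ | ⟨hα, -⟩ <;> rw [hα]
  · nlinarith [mul_nonneg (abs_nonneg α) (sq_nonneg (x - y))]
  · nlinarith [mul_nonneg (abs_nonneg α) (sq_nonneg (x + y))]

theorem quadratic_form_le_mul_sum_sq (α β γ δ u v w : ℝ) :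
    2 * α * v ^ 2 + 2 * β * u * v + 2 * γ * v * w + 2 * δ * u * w ≤
      (2 * |α| + |β| + |γ| + |δ|) * (v ^ 2 + u ^ 2 + w ^ 2) := by
  nlinarith [two_mul_mul_le_abs_mul α v v, two_mul_mul_le_abs_mul β u v,
    two_mul_mul_le_abs_mul γ v w, two_mul_mul_le_abs_mul δ u w,
    mul_nonneg (abs_nonneg α) (sq_nonneg u), mul_nonneg (abs_nonneg α) (sq_nonneg w),
    mul_nonneg (abs_nonneg β) (sq_nonneg w), mul_nonneg (abs_nonneg γ) (sq_nonneg u),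
    mul_nonneg (abs_nonneg δ) (sq_nonneg v)]

section ModelSystem

variable {q' : ℝ} {f₁ f₂ f₃ : ℝ → ℝ} {lam : ℝ} {a c a' c' : ℝ → ℝ} {I : Set ℝ}

theorem SolvesModelSystem.sub (hI : IsOpen I) (hs : SolvesModelSystem q' f₁ f₂ f₃ lam a c I)
    (hs' : SolvesModelSystem q' f₁ f₂ f₃ lam a' c' I) :
    SolvesModelSystem q' f₁ f₂ f₃ lam (a - a') (c - c') I := by
  intro τ hτ
  obtain ⟨ha, ha', hc, hE, hC⟩ := hs τ hτ
  obtain ⟨hb, hb', hd, hE', hC'⟩ := hs' τ hτ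
  have hderiv : deriv (a - a') =ᶠ[𝓝 τ] deriv a - deriv a' := by
    filter_upwards [hI.mem_nhds hτ] with s hs_mem
    exact deriv_sub (hs s hs_mem).1 (hs' s hs_mem).1
  have hderiv2 : deriv (deriv (a - a')) τ = deriv (deriv a) τ - deriv (deriv a') τ := by
    rw [hderiv.deriv_eq]
    exact deriv_sub ha' hb'
  refine ⟨ha.sub hb, (ha'.sub hb').congr_of_eventuallyEq hderiv, hc.sub hd, ?_, ?_⟩
  · rw [hderiv2, hderiv.eq_of_nhds]
    simp only [Pi.sub_apply]
    linear_combination hE - hE'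
  · rw [deriv_sub hc hd, hC, hC', Pi.sub_apply]
    ring

theorem SolvesModelSystem.hasDerivAt_energy (hs : SolvesModelSystem q' f₁ f₂ f₃ lam a c I)
    {τ : ℝ} (hτ : τ ∈ I) :
    HasDerivAt (fun s => deriv a s ^ 2 + a s ^ 2 + c s ^ 2)
      (2 * deriv a τ * deriv (deriv a) τ + 2 * a τ * deriv a τ + 2 * c τ * (2 * τ * a τ))
      τ := by
  obtain ⟨ha, ha', hc, -, hC⟩ := hs τ hτ
  rw [← hC]
  refine (((ha'.hasDerivAt.fun_pow 2).add (ha.hasDerivAt.fun_pow 2)).add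
    (hc.hasDerivAt.fun_pow 2)).congr_deriv ?_
  norm_num

theorem SolvesModelSystem.energy_deriv_le (hs : SolvesModelSystem q' f₁ f₂ f₃ lam a c I)
    {F τ t : ℝ} (hτ : τ ∈ I) (hτ0 : 0 < τ) (hτt : τ ≤ t)
    (hf₁ : |f₁ τ| ≤ F) (hf₂ : |f₂ τ| ≤ F) (hf₃ : |f₃ τ| ≤ F) :
    2 * deriv a τ * deriv (deriv a) τ + 2 * a τ * deriv a τ + 2 * c τ * (2 * τ * a τ) ≤
      (2 * F * t + F * t ^ 2 + 4 * |q'| + 4 * lam ^ 2 + 1 + F + 2 * t) *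
        (deriv a τ ^ 2 + a τ ^ 2 + c τ ^ 2) := by
  obtain ⟨-, -, -, hE, -⟩ := hs τ hτ
  set μ := 4 * lam ^ 2 * ((τ ^ 2 + 1) ^ 2)⁻¹
  have hμ0 : 0 ≤ μ := by positivity
  have hμ : μ ≤ 4 * lam ^ 2 :=
    mul_le_of_le_one_right (by positivity) (inv_le_one_of_one_le₀ (by nlinarith [sq_nonneg τ]))
  have hform :
      2 * deriv a τ * deriv (deriv a) τ + 2 * a τ * deriv a τ + 2 * c τ * (2 * τ * a τ) =
        2 * (f₁ τ * τ) * deriv a τ ^ 2 + 2 * (f₂ τ * τ ^ 2 - 4 * q' - μ + 1) * a τ * deriv a τ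
          + 2 * f₃ τ * deriv a τ * c τ + 2 * (2 * τ) * a τ * c τ
          - 2 * τ⁻¹ * deriv a τ ^ 2 := by
    linear_combination 2 * deriv a τ * hE
  have hsingular : 0 ≤ 2 * τ⁻¹ * deriv a τ ^ 2 := by positivity
  have hF : 0 ≤ F := (abs_nonneg _).trans hf₁
  have h₁ : |f₁ τ * τ| ≤ F * t := by
    rw [abs_mul, abs_of_pos hτ0]
    exact mul_le_mul hf₁ hτt hτ0.le hF
  have h₂ : |f₂ τ * τ ^ 2| ≤ F * t ^ 2 := by
    rw [abs_mul, abs_of_nonneg (sq_nonneg τ)]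
    exact mul_le_mul hf₂ (pow_le_pow_left₀ hτ0.le hτt 2) (sq_nonneg τ) hF
  have h₂' : |f₂ τ * τ ^ 2 - 4 * q' - μ + 1| ≤ F * t ^ 2 + 4 * |q'| + 4 * lam ^ 2 + 1 := by
    rw [abs_le] at h₂ ⊢
    constructor <;> linarith [le_abs_self q', neg_abs_le q']
  have h₄ : |2 * τ| ≤ 2 * t := by rw [abs_of_pos (by linarith)]; linarith
  have hcoef : 2 * |f₁ τ * τ| + |f₂ τ * τ ^ 2 - 4 * q' - μ + 1| + |f₃ τ| + |2 * τ| ≤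
      2 * F * t + F * t ^ 2 + 4 * |q'| + 4 * lam ^ 2 + 1 + F + 2 * t := by
    linarith
  rw [hform]
  calc _ ≤ (2 * |f₁ τ * τ| + |f₂ τ * τ ^ 2 - 4 * q' - μ + 1| + |f₃ τ| + |2 * τ|) *
        (deriv a τ ^ 2 + a τ ^ 2 + c τ ^ 2) := by
        linarith [quadratic_form_le_mul_sum_sq (f₁ τ * τ) (f₂ τ * τ ^ 2 - 4 * q' - μ + 1)
          (f₃ τ) (2 * τ) (a τ) (deriv a τ) (c τ)]
    _ ≤ _ := mul_le_mul_of_nonneg_right hcoef (by positivity)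

theorem HasAsymptoticData.sub {c₀ O h c₀' O' h' : ℝ}
    (ha : ∀ τ ∈ Ioc (0 : ℝ) 1, DifferentiableAt ℝ a τ)
    (ha' : ∀ τ ∈ Ioc (0 : ℝ) 1, DifferentiableAt ℝ a' τ)
    (hd : HasAsymptoticData a c c₀ O h) (hd' : HasAsymptoticData a' c' c₀' O' h') :
    HasAsymptoticData (a - a') (c - c') (c₀ - c₀') (O - O') (h - h') := by
  obtain ⟨hc, hc0, K, hK0, hK⟩ := hd
  obtain ⟨hc', hc0', K', hK0', hK'⟩ := hd'
  refine ⟨hc.sub hc', by simp [hc0, hc0'], K + K', add_nonneg hK0 hK0', fun τ hτ => ⟨?_, ?_⟩⟩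
  · calc |(a - a') τ - (O - O') * log τ - (h - h')|
        = |(a τ - O * log τ - h) - (a' τ - O' * log τ - h')| := by
          rw [Pi.sub_apply]; ring_nf
      _ ≤ |a τ - O * log τ - h| + |a' τ - O' * log τ - h'| := abs_sub _ _
      _ ≤ (K + K') * τ ^ 2 * (1 + log τ ^ 2) := by linarith [(hK τ hτ).1, (hK' τ hτ).1]
  · calc |deriv (a - a') τ - (O - O') / τ|
        = |(deriv a τ - O / τ) - (deriv a' τ - O' / τ)| := by
          rw [deriv_sub (ha τ hτ) (ha' τ hτ)]; ring_nf
      _ ≤ |deriv a τ - O / τ| + |deriv a' τ - O' / τ| := abs_sub _ _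
      _ ≤ (K + K') * τ * (1 + log τ ^ 2) := by linarith [(hK τ hτ).2, (hK' τ hτ).2]

theorem HasAsymptoticData.tendsto_energy (hd : HasAsymptoticData a c 0 0 0) :
    Tendsto (fun τ => deriv a τ ^ 2 + a τ ^ 2 + c τ ^ 2) (𝓝[>] 0) (𝓝 0) := by
  obtain ⟨hc, hc0, K, -, hK⟩ := hd
  have hIoc : Ioc (0 : ℝ) 1 ∈ 𝓝[>] 0 := Ioc_mem_nhdsGT zero_lt_one
  have hrate := tendsto_mul_one_add_log_sq_nhdsGT_zero
  have hda : Tendsto (deriv a) (𝓝[>] 0) (𝓝 0) := by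
    refine squeeze_zero_norm' ?_ (by simpa using hrate.const_mul K)
    filter_upwards [hIoc] with τ hτ
    simpa [mul_assoc] using (hK τ hτ).2
  have ha : Tendsto a (𝓝[>] 0) (𝓝 0) := by
    have hid : Tendsto (fun x : ℝ => x) (𝓝[>] 0) (𝓝 0) :=
      tendsto_nhdsWithin_of_tendsto_nhds tendsto_id
    refine squeeze_zero_norm' ?_ (by simpa using (hid.mul hrate).const_mul K)
    filter_upwards [hIoc] with τ hτ
    have := (hK τ hτ).1
    simp only [zero_mul, sub_zero] at this
    rw [Real.norm_eq_abs]
    linarith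
  have hc' : Tendsto c (𝓝[>] 0) (𝓝 0) := by
    have := (hc 0 self_mem_Ici).tendsto.mono_left (nhdsWithin_mono 0 Ioi_subset_Ici_self)
    rwa [hc0] at this
  simpa using ((hda.pow 2).add (ha.pow 2)).add (hc'.pow 2)

theorem SolvesModelSystem.eq_zero_of_hasAsymptoticData_zero {F : ℝ}
    (hs : SolvesModelSystem q' f₁ f₂ f₃ lam a c (Ioi 0))
    (hf₁ : ∀ τ ≥ (0 : ℝ), |f₁ τ| ≤ F) (hf₂ : ∀ τ ≥ (0 : ℝ), |f₂ τ| ≤ F)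
    (hf₃ : ∀ τ ≥ (0 : ℝ), |f₃ τ| ≤ F) (hd : HasAsymptoticData a c 0 0 0) :
    ∀ τ > (0 : ℝ), a τ = 0 ∧ c τ = 0 := by
  intro t ht
  have hE : deriv a t ^ 2 + a t ^ 2 + c t ^ 2 ≤ 0 :=
    le_zero_of_hasDerivAt_le_mul_self_of_tendsto
      (f := fun s => deriv a s ^ 2 + a s ^ 2 + c s ^ 2) ht
      (fun τ hτ => hs.hasDerivAt_energy hτ.1)
      (fun τ hτ => hs.energy_deriv_le hτ.1 hτ.1 hτ.2
        (hf₁ τ hτ.1.le) (hf₂ τ hτ.1.le) (hf₃ τ hτ.1.le))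
      hd.tendsto_energy
  have ha : a t ^ 2 = 0 := by nlinarith [sq_nonneg (deriv a t), sq_nonneg (c t)]
  have hc : c t ^ 2 = 0 := by nlinarith [sq_nonneg (deriv a t), sq_nonneg (a t)]
  exact ⟨pow_eq_zero_iff two_ne_zero |>.mp ha, pow_eq_zero_iff two_ne_zero |>.mp hc⟩

end ModelSystem

theorem uniqueness_of_scattering_states_general (q' F : ℝ)
    (f₁ f₂ f₃ : ℝ → ℝ)
    (hf₁ : ∀ τ ≥ (0:ℝ), |f₁ τ| ≤ F) (hf₂ : ∀ τ ≥ (0:ℝ), |f₂ τ| ≤ F)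
    (hf₃ : ∀ τ ≥ (0:ℝ), |f₃ τ| ≤ F)
    (lam : ℝ)
    (a c a' c' : ℝ → ℝ) (c₀ O h : ℝ)
    (hsol : SolvesModelSystem q' f₁ f₂ f₃ lam a c (Ioi 0))
    (hsol' : SolvesModelSystem q' f₁ f₂ f₃ lam a' c' (Ioi 0))
    (hdata : HasAsymptoticData a c c₀ O h)
    (hdata' : HasAsymptoticData a' c' c₀ O h) :
    ∀ τ > (0:ℝ), a τ = a' τ ∧ c τ = c' τ := by
  have hdiff := hsol.sub isOpen_Ioi hsol'
  have hdata₀ : HasAsymptoticData (a - a') (c - c') 0 0 0 := by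
    simpa using hdata.sub (fun τ hτ => (hsol τ hτ.1).1) (fun τ hτ => (hsol' τ hτ.1).1) hdata'
  intro τ hτ
  obtain ⟨ha, hc⟩ := hdiff.eq_zero_of_hasAsymptoticData_zero hf₁ hf₂ hf₃ hdata₀ τ hτ
  exact ⟨sub_eq_zero.mp ha, sub_eq_zero.mp hc⟩

/-- Uniqueness of scattering states for the model system (single-mode version of
Proposition 3.6 / "uniqueness of smooth solutions" of the paper). -/
theorem uniqueness_of_scattering_states (q' F : ℝ) (hq : 1 ≤ q') (hF : 0 ≤ F)
    (f₁ f₂ f₃ : ℝ → ℝ)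
    (hf₁c : ContinuousOn f₁ (Ici 0)) (hf₂c : ContinuousOn f₂ (Ici 0))
    (hf₃c : ContinuousOn f₃ (Ici 0))
    (hf₁ : ∀ τ ≥ (0:ℝ), |f₁ τ| ≤ F) (hf₂ : ∀ τ ≥ (0:ℝ), |f₂ τ| ≤ F)
    (hf₃ : ∀ τ ≥ (0:ℝ), |f₃ τ| ≤ F)
    (lam : ℝ) (hlam : 0 ≤ lam)
    (a c a' c' : ℝ → ℝ) (c₀ O h : ℝ)
    (hsol : SolvesModelSystem q' f₁ f₂ f₃ lam a c (Ioi 0))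
    (hsol' : SolvesModelSystem q' f₁ f₂ f₃ lam a' c' (Ioi 0))
    (hdata : HasAsymptoticData a c c₀ O h)
    (hdata' : HasAsymptoticData a' c' c₀ O h) :
    ∀ τ > (0:ℝ), a τ = a' τ ∧ c τ = c' τ :=
  uniqueness_of_scattering_states_general q' F f₁ f₂ f₃ hf₁ hf₂ hf₃ lam a c a' c' c₀ O h hsol hsol'
    hdata hdata'
end

section
/- Non-sharp backward growth estimates, single-mode version (Proposition 3.12 of the paper): there exists a constant C > 0, depending only on q' and F, such that for every λ ≥ 0 and every pair (a, c) solving the mode-λ model system on the interval (0, 1], one has for all τ ∈ (0, 1]: (i) a(τ)² ≤ C·(1 + (log τ)²)·( (1+λ²)·a(1)² + a'(1)² + c(1)² ); (ii) (τ·a'(τ))² ≤ C·( (1+λ²)·a(1)² + a'(1)² + c(1)² ). -/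
open Set Filter

/-!
The energy `E = (τa')² + 4q'(τa)² + 4λ²τ²(τ² + 1)⁻²a² + c²` satisfies `E' ≥ -(4F + 2) E` on
`(0, 1]`, with a constant independent of `λ` because the weight `τ²(τ² + 1)⁻²` increases there.
Grönwall's inequality run backwards from `τ = 1` bounds `E(τ)` by `e^{4F+2} E(1)`, which is (ii)
since `(τa')² ≤ E`. Then `|τa'| ≤ √E`, and the mean value theorem in the variable `log τ` gives (i).
-/

open Real

lemma le_exp_mul_of_neg_mul_le_deriv {g : ℝ → ℝ} {γ t u : ℝ} (htu : t ≤ u)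
    (hg : ∀ x ∈ Icc t u, DifferentiableAt ℝ g x) (hbound : ∀ x ∈ Icc t u, -(γ * g x) ≤ deriv g x) :
    g t ≤ exp (γ * (u - t)) * g u := by
  have hV : ∀ x ∈ Icc t u,
      HasDerivAt (fun s ↦ g s * exp (γ * s)) ((deriv g x + γ * g x) * exp (γ * x)) x := by
    intro x hx
    have hexp : HasDerivAt (fun s ↦ exp (γ * s)) (exp (γ * x) * γ) x := by
      simpa using ((hasDerivAt_id x).const_mul γ).exp
    exact ((hg x hx).hasDerivAt.mul hexp).congr_deriv (by ring)
  have hmono : MonotoneOn (fun s ↦ g s * exp (γ * s)) (Icc t u) := by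
    refine monotoneOn_of_hasDerivWithinAt_nonneg (convex_Icc t u)
      (fun x hx ↦ (hV x hx).continuousAt.continuousWithinAt)
      (fun x hx ↦ (hV x (interior_subset hx)).hasDerivWithinAt) fun x hx ↦ ?_
    have := hbound x (interior_subset hx)
    exact mul_nonneg (by linarith) (exp_pos _).le
  have h := hmono (left_mem_Icc.2 htu) (right_mem_Icc.2 htu) htu
  have hexp : exp (γ * (u - t)) = exp (γ * u) / exp (γ * t) := by rw [← exp_sub, mul_sub]
  rw [hexp, div_mul_eq_mul_div, le_div_iff₀ (exp_pos _)]
  linarith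

lemma abs_sub_le_mul_log_sub {f : ℝ → ℝ} {B t u : ℝ} (ht : 0 < t) (htu : t ≤ u)
    (hf : ∀ s ∈ Icc t u, DifferentiableAt ℝ f s) (hB : ∀ s ∈ Icc t u, |s * deriv f s| ≤ B) :
    |f u - f t| ≤ B * (log u - log t) := by
  have hu : 0 < u := ht.trans_le htu
  have hexp_mem : ∀ x ∈ Icc (log t) (log u), exp x ∈ Icc t u := fun x hx ↦ by
    rw [← exp_log ht, ← exp_log hu]; exact ⟨exp_le_exp.2 hx.1, exp_le_exp.2 hx.2⟩
  have hcomp : ∀ x ∈ Icc (log t) (log u), HasDerivAt (f ∘ exp) (exp x * deriv f (exp x)) x :=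
    fun x hx ↦ by
      rw [mul_comm]; exact (hf _ (hexp_mem x hx)).hasDerivAt.comp x (hasDerivAt_exp x)
  have h := (convex_Icc (log t) (log u)).norm_image_sub_le_of_norm_hasDerivWithin_le
    (fun x hx ↦ (hcomp x hx).hasDerivWithinAt) (fun x hx ↦ hB _ (hexp_mem x hx))
    (left_mem_Icc.2 (log_le_log ht htu)) (right_mem_Icc.2 (log_le_log ht htu))
  simpa [exp_log ht, exp_log hu, abs_of_nonneg (sub_nonneg.2 (log_le_log ht htu))] using h

lemma sq_le_of_sq_mul_deriv_le {f : ℝ → ℝ} {M t : ℝ}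
    (hf : ∀ s ∈ Ioc (0 : ℝ) 1, DifferentiableAt ℝ f s)
    (hM : ∀ s ∈ Ioc (0 : ℝ) 1, (s * deriv f s) ^ 2 ≤ M) (ht : t ∈ Ioc (0 : ℝ) 1) :
    f t ^ 2 ≤ 2 * f 1 ^ 2 + 2 * M * log t ^ 2 := by
  have hM0 : 0 ≤ M := (sq_nonneg _).trans (hM 1 ⟨one_pos, le_rfl⟩)
  have hIcc : Icc t 1 ⊆ Ioc 0 1 := fun s hs ↦ ⟨ht.1.trans_le hs.1, hs.2⟩
  have hdiff : |f 1 - f t| ≤ √M * -log t := by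
    simpa using abs_sub_le_mul_log_sub ht.1 ht.2 (fun s hs ↦ hf s (hIcc hs))
      (fun s hs ↦ abs_le_sqrt (hM s (hIcc hs)))
  have hsq : (f 1 - f t) ^ 2 ≤ M * log t ^ 2 := by
    have := pow_le_pow_left₀ (abs_nonneg _) hdiff 2
    rwa [sq_abs, mul_pow, sq_sqrt hM0, neg_sq] at this
  nlinarith [sq_nonneg (f 1 + (f 1 - f t))]

lemma neg_mul_add_sq_le_two_mul_mul {f F r : ℝ} (hf : |f| ≤ F) (hr : r ∈ Icc (0 : ℝ) 1)
    (x y : ℝ) : -(F * (x ^ 2 + y ^ 2)) ≤ 2 * f * r * x * y := by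
  have hfr : |f * r| ≤ F := by
    rw [abs_mul, abs_of_nonneg hr.1]
    nlinarith [abs_nonneg f, hr.2]
  have hxy : |2 * x * y| ≤ x ^ 2 + y ^ 2 :=
    abs_le.2 ⟨by nlinarith [sq_nonneg (x + y)], two_mul_le_add_sq x y⟩
  have := abs_mul (f * r) (2 * x * y) ▸
    mul_le_mul hfr hxy (abs_nonneg _) ((abs_nonneg _).trans hf)
  linarith [neg_abs_le (f * r * (2 * x * y))]

lemma neg_mul_sum_sq_le_forcing_terms {F f₁ f₂ f₃ τ u v w : ℝ} (hτ : τ ∈ Icc (0 : ℝ) 1)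
    (hf₁ : |f₁| ≤ F) (hf₂ : |f₂| ≤ F) (hf₃ : |f₃| ≤ F) :
    -((4 * F + 2) * (u ^ 2 + v ^ 2 + w ^ 2)) ≤
      2 * f₁ * τ * u ^ 2 + 2 * f₂ * τ ^ 2 * u * v + 2 * f₃ * τ * u * w + 4 * v * w := by
  have hτ2 : τ ^ 2 ∈ Icc (0 : ℝ) 1 := ⟨sq_nonneg τ, pow_le_one₀ hτ.1 hτ.2⟩
  have h₁ := neg_mul_add_sq_le_two_mul_mul hf₁ hτ u u
  have h₂ := neg_mul_add_sq_le_two_mul_mul hf₂ hτ2 u v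
  have h₃ := neg_mul_add_sq_le_two_mul_mul hf₃ hτ u w
  have h₄ := neg_mul_add_sq_le_two_mul_mul (abs_two.le : |(2 : ℝ)| ≤ 2) ⟨zero_le_one, le_rfl⟩ v w
  have hF : 0 ≤ F := (abs_nonneg _).trans hf₁
  nlinarith [mul_nonneg hF (sq_nonneg v), mul_nonneg hF (sq_nonneg w)]

noncomputable def modelEnergy (q' lam : ℝ) (a c : ℝ → ℝ) (s : ℝ) : ℝ :=
  (s * deriv a s) ^ 2 + 4 * q' * (s * a s) ^ 2
    + 4 * lam ^ 2 * (s ^ 2 / (s ^ 2 + 1) ^ 2) * a s ^ 2 + c s ^ 2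

section modelEnergy

variable {q' lam : ℝ} {a c : ℝ → ℝ}

variable (lam a c) in
lemma sum_sq_le_modelEnergy (hq : 1 / 4 ≤ q') (s : ℝ) :
    (s * deriv a s) ^ 2 + (s * a s) ^ 2 + c s ^ 2 ≤ modelEnergy q' lam a c s := by
  have hweight : 0 ≤ 4 * lam ^ 2 * (s ^ 2 / (s ^ 2 + 1) ^ 2) * a s ^ 2 := by positivity
  have hq' : (s * a s) ^ 2 ≤ 4 * q' * (s * a s) ^ 2 := by nlinarith [sq_nonneg (s * a s)]
  unfold modelEnergy
  linarith

lemma modelEnergy_nonneg (hq : 1 / 4 ≤ q') (s : ℝ) : 0 ≤ modelEnergy q' lam a c s :=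
  (by positivity : (0 : ℝ) ≤ _).trans (sum_sq_le_modelEnergy lam a c hq s)

lemma modelEnergy_one_le (hq : 1 / 4 ≤ q') :
    modelEnergy q' lam a c 1 ≤ 4 * q' * ((1 + lam ^ 2) * a 1 ^ 2 + deriv a 1 ^ 2 + c 1 ^ 2) := by
  have hD : 0 ≤ lam ^ 2 * a 1 ^ 2 + deriv a 1 ^ 2 + c 1 ^ 2 := by positivity
  unfold modelEnergy
  norm_num
  nlinarith

variable {f₁ f₂ f₃ : ℝ → ℝ}

lemma hasDerivAt_modelEnergy {I : Set ℝ} {τ : ℝ}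
    (hsol : SolvesModelSystem q' f₁ f₂ f₃ lam a c I) (hτ : τ ∈ I) (hτ0 : τ ≠ 0) :
    HasDerivAt (modelEnergy q' lam a c)
      (8 * q' * τ * a τ ^ 2 + 8 * lam ^ 2 * (τ * (1 - τ ^ 2) / (τ ^ 2 + 1) ^ 3) * a τ ^ 2
        + (2 * f₁ τ * τ * (τ * deriv a τ) ^ 2
          + 2 * f₂ τ * τ ^ 2 * (τ * deriv a τ) * (τ * a τ)
          + 2 * f₃ τ * τ * (τ * deriv a τ) * c τ + 4 * (τ * a τ) * c τ)) τ := by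
  obtain ⟨ha, ha', hc, hode, hc'⟩ := hsol τ hτ
  have hden : (τ ^ 2 + 1) ^ 2 ≠ 0 := by positivity
  have hweight := (hasDerivAt_pow 2 τ).div (((hasDerivAt_pow 2 τ).add_const 1).pow 2) hden
  have h := (((((hasDerivAt_id τ).mul ha'.hasDerivAt).pow 2).add
    ((((hasDerivAt_id τ).mul ha.hasDerivAt).pow 2).const_mul (4 * q'))).add
    ((hweight.const_mul (4 * lam ^ 2)).mul (ha.hasDerivAt.pow 2))).add
    ((hc' ▸ hc.hasDerivAt).pow 2)
  refine h.congr_deriv ?_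
  simp only [Pi.mul_apply, Pi.pow_apply, Pi.div_apply, id]
  push_cast
  rw [eq_sub_of_add_eq (eq_sub_of_add_eq (eq_sub_of_add_eq hode))]
  field_simp
  ring

lemma modelEnergy_le_exp_mul {F : ℝ} (hq : 1 / 4 ≤ q')
    (hsol : SolvesModelSystem q' f₁ f₂ f₃ lam a c (Ioc 0 1))
    (hf₁ : ∀ τ ∈ Ioc (0 : ℝ) 1, |f₁ τ| ≤ F) (hf₂ : ∀ τ ∈ Ioc (0 : ℝ) 1, |f₂ τ| ≤ F)
    (hf₃ : ∀ τ ∈ Ioc (0 : ℝ) 1, |f₃ τ| ≤ F) {t : ℝ} (ht : t ∈ Ioc (0 : ℝ) 1) :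
    modelEnergy q' lam a c t ≤ exp (4 * F + 2) * modelEnergy q' lam a c 1 := by
  have hIcc : Icc t 1 ⊆ Ioc 0 1 := fun s hs ↦ ⟨ht.1.trans_le hs.1, hs.2⟩
  have hF : 0 ≤ F := (abs_nonneg _).trans (hf₁ 1 ⟨one_pos, le_rfl⟩)
  have hgronwall := le_exp_mul_of_neg_mul_le_deriv (γ := 4 * F + 2) ht.2
    (fun x hx ↦ (hasDerivAt_modelEnergy hsol (hIcc hx) (hIcc hx).1.ne').differentiableAt)
    fun x hx ↦ by
      obtain ⟨hx0, hx1⟩ := hIcc hx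
      rw [(hasDerivAt_modelEnergy hsol ⟨hx0, hx1⟩ hx0.ne').deriv]
      have hweight : 0 ≤ 8 * lam ^ 2 * (x * (1 - x ^ 2) / (x ^ 2 + 1) ^ 3) * a x ^ 2 := by
        have : 0 ≤ 1 - x ^ 2 := by nlinarith
        positivity
      have hrate := neg_mul_sum_sq_le_forcing_terms (u := x * deriv a x) (v := x * a x) (w := c x)
        ⟨hx0.le, hx1⟩ (hf₁ x ⟨hx0, hx1⟩) (hf₂ x ⟨hx0, hx1⟩) (hf₃ x ⟨hx0, hx1⟩)
      have hE := mul_le_mul_of_nonneg_left (sum_sq_le_modelEnergy lam a c hq x)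
        (by linarith : (0 : ℝ) ≤ 4 * F + 2)
      have hpotential : 0 ≤ 8 * q' * x * a x ^ 2 := by
        have : 0 ≤ q' := by linarith
        positivity
      linarith
  calc modelEnergy q' lam a c t ≤ exp ((4 * F + 2) * (1 - t)) * modelEnergy q' lam a c 1 :=
        hgronwall
    _ ≤ exp (4 * F + 2) * modelEnergy q' lam a c 1 := by
        gcongr
        · exact modelEnergy_nonneg hq 1
        · nlinarith [ht.1]

end modelEnergy

theorem nonsharp_backward_estimates_general (q' F : ℝ) (hq : 1 ≤ q') :
    ∃ C > 0, ∀ f₁ f₂ f₃ : ℝ → ℝ,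
      ContinuousOn f₁ (Ici 0) → ContinuousOn f₂ (Ici 0) → ContinuousOn f₃ (Ici 0) →
      (∀ τ ≥ (0:ℝ), |f₁ τ| ≤ F) → (∀ τ ≥ (0:ℝ), |f₂ τ| ≤ F) → (∀ τ ≥ (0:ℝ), |f₃ τ| ≤ F) →
      ∀ lam : ℝ, 0 ≤ lam →
      ∀ a c : ℝ → ℝ,
      SolvesModelSystem q' f₁ f₂ f₃ lam a c (Ioc 0 1) →
      ∀ τ ∈ Ioc (0:ℝ) 1,
        (a τ ^ 2 ≤ C * (1 + Real.log τ ^ 2)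
            * ((1 + lam ^ 2) * a 1 ^ 2 + deriv a 1 ^ 2 + c 1 ^ 2)) ∧
        ((τ * deriv a τ) ^ 2
            ≤ C * ((1 + lam ^ 2) * a 1 ^ 2 + deriv a 1 ^ 2 + c 1 ^ 2)) := by
  have hq' : 1 / 4 ≤ q' := by linarith
  set K := 4 * q' * exp (4 * F + 2) with hK
  have hK0 : 0 < K := by positivity
  refine ⟨2 + 2 * K, by positivity, ?_⟩
  intro f₁ f₂ f₃ _ _ _ hf₁ hf₂ hf₃ lam _ a c hsol τ hτ
  set D := (1 + lam ^ 2) * a 1 ^ 2 + deriv a 1 ^ 2 + c 1 ^ 2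
  have hD : 0 ≤ D := by positivity
  have hbound : ∀ s ∈ Ioc (0 : ℝ) 1, (s * deriv a s) ^ 2 ≤ K * D := fun s hs ↦ calc
    (s * deriv a s) ^ 2 ≤ modelEnergy q' lam a c s := by
      nlinarith [sum_sq_le_modelEnergy lam a c hq' s]
    _ ≤ exp (4 * F + 2) * modelEnergy q' lam a c 1 :=
      modelEnergy_le_exp_mul hq' hsol (fun t ht ↦ hf₁ t ht.1.le) (fun t ht ↦ hf₂ t ht.1.le)
        (fun t ht ↦ hf₃ t ht.1.le) hs
    _ ≤ K * D := by
      rw [hK, mul_comm (4 * q'), mul_assoc]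
      exact mul_le_mul_of_nonneg_left (modelEnergy_one_le hq') (exp_pos _).le
  have ha1 : a 1 ^ 2 ≤ D := by nlinarith [sq_nonneg lam, sq_nonneg (deriv a 1), sq_nonneg (c 1)]
  refine ⟨?_, (hbound τ hτ).trans (by nlinarith)⟩
  calc a τ ^ 2 ≤ 2 * a 1 ^ 2 + 2 * (K * D) * log τ ^ 2 :=
        sq_le_of_sq_mul_deriv_le (fun s hs ↦ (hsol s hs).1) hbound hτ
    _ ≤ (2 + 2 * K) * (1 + log τ ^ 2) * D := by
        nlinarith [mul_nonneg hD (sq_nonneg (log τ)), mul_nonneg hK0.le hD]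

/-- Non-sharp backward growth estimates (single-mode version of Proposition 3.12
of the paper). -/
theorem nonsharp_backward_estimates (q' F : ℝ) (hq : 1 ≤ q') (hF : 0 ≤ F) :
    ∃ C > 0, ∀ f₁ f₂ f₃ : ℝ → ℝ,
      ContinuousOn f₁ (Ici 0) → ContinuousOn f₂ (Ici 0) → ContinuousOn f₃ (Ici 0) →
      (∀ τ ≥ (0:ℝ), |f₁ τ| ≤ F) → (∀ τ ≥ (0:ℝ), |f₂ τ| ≤ F) → (∀ τ ≥ (0:ℝ), |f₃ τ| ≤ F) →
      ∀ lam : ℝ, 0 ≤ lam →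
      ∀ a c : ℝ → ℝ,
      SolvesModelSystem q' f₁ f₂ f₃ lam a c (Ioc 0 1) →
      ∀ τ ∈ Ioc (0:ℝ) 1,
        (a τ ^ 2 ≤ C * (1 + Real.log τ ^ 2)
            * ((1 + lam ^ 2) * a 1 ^ 2 + deriv a 1 ^ 2 + c 1 ^ 2)) ∧
        ((τ * deriv a τ) ^ 2
            ≤ C * ((1 + lam ^ 2) * a 1 ^ 2 + deriv a 1 ^ 2 + c 1 ^ 2)) :=
  nonsharp_backward_estimates_general q' F hq
end
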